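/- Let J_t = Σ_{l=1}^{N_t} γ_l be a compound Poisson process on [0, T] with N_T < ∞ a.s., and let Y be a process with the UBI modulus |Y_s − Y_t| ≤ C(δ log(1/δ))^{1/2} for |s−t| ≤ δ. Set X = Y + J and let ϑ(δ) → 0 with δ log(1/δ)/ϑ(δ) → 0. Then a.s. for all sufficiently small δ: for every interval (t_{i-1}, t_i] of length δ, the event {(X_{t_i} − X_{t_{i-1}})² ≤ ϑ(δ)} implies {N_{t_i} − N_{t_{i-1}} = 0}, provided min_l |γ_l| > 0 and jumps are separated (at most one jump per interval for small δ). -/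

import Mathlib

open Real Filter Topology Set

/-- Mancini's threshold jump-detection principle (finite activity, pathwise
version): if `X = Y + J` with `Y` having the Brownian modulus (UBI), jump sizes
bounded below by `γmin > 0`, at most one jump per small interval, and the
threshold `ϑ(δ) → 0` with `δ log(1/δ)/ϑ(δ) → 0`, then for all sufficiently
small `δ`, on each interval `(t_{i-1}, t_i]` of length `δ` the event
`(ΔᵢX)² ≤ ϑ(δ)` forces `ΔᵢN = 0`. -/
theorem stmt13 (T C γmin : ℝ) (hT : 0 < T) (hC : 0 ≤ C) (hγ : 0 < γmin)
    (Y J : ℝ → ℝ) (N : ℝ → ℕ) (X : ℝ → ℝ) (hX : ∀ t, X t = Y t + J t)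
    (ϑ : ℝ → ℝ) (hϑpos : ∀ δ, 0 < δ → 0 < ϑ δ)
    (hϑ0 : Tendsto ϑ (𝓝[>] 0) (𝓝 0))
    (hratio : Tendsto (fun δ => δ * Real.log (1 / δ) / ϑ δ) (𝓝[>] 0) (𝓝 0))
    -- UBI modulus of the continuous part `Y`
    (hUBI : ∃ δ₀ > (0:ℝ), ∀ δ, 0 < δ → δ ≤ δ₀ →
      ∀ s ∈ Icc (0:ℝ) T, ∀ t ∈ Icc (0:ℝ) T, |s - t| ≤ δ →
        |Y s - Y t| ≤ C * Real.sqrt (δ * Real.log (1 / δ)))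
    -- jumps are separated and bounded below: over a small interval, a jump of
    -- `N` entails a jump of `J` of size at least `γmin`
    (hsep : ∃ δ₂ > (0:ℝ), ∀ δ, 0 < δ → δ ≤ δ₂ →
      ∀ s ∈ Icc (0:ℝ) T, ∀ t ∈ Icc (0:ℝ) T, s ≤ t → t - s ≤ δ →
        N s ≠ N t → γmin ≤ |J t - J s|) :
    ∃ δ₁ > (0:ℝ), ∀ δ, 0 < δ → δ ≤ δ₁ → ∀ i : ℕ,
      ((i : ℝ) + 1) * δ ≤ T →
      (X (((i : ℝ) + 1) * δ) - X ((i : ℝ) * δ)) ^ 2 ≤ ϑ δ →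
      N (((i : ℝ) + 1) * δ) = N ((i : ℝ) * δ) := by

  obtain ⟨δ₀, hδ₀, hU⟩ := hUBI
  obtain ⟨δ₂, hδ₂, hS⟩ := hsep
  have hlog : Tendsto (fun δ => δ * Real.log (1/δ)) (𝓝[>] (0:ℝ)) (𝓝 0) := by
    have h := hratio.mul hϑ0
    rw [mul_zero] at h
    refine h.congr' ?_
    filter_upwards [self_mem_nhdsWithin] with δ hδ
    field_simp [(hϑpos δ hδ).ne']
  have hf : Tendsto (fun δ => Real.sqrt (ϑ δ) + C * Real.sqrt (δ * Real.log (1/δ)))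
      (𝓝[>] (0:ℝ)) (𝓝 0) := by
    have h1 : Tendsto (fun δ => Real.sqrt (ϑ δ)) (𝓝[>] (0:ℝ)) (𝓝 0) := by
      simpa [Function.comp_def] using (Real.continuous_sqrt.tendsto 0).comp hϑ0
    have h2 : Tendsto (fun δ => Real.sqrt (δ * Real.log (1/δ))) (𝓝[>] (0:ℝ)) (𝓝 0) := by
      simpa [Function.comp_def] using (Real.continuous_sqrt.tendsto 0).comp hlog
    simpa using h1.add (h2.const_mul C)
  have hev : ∀ᶠ δ in 𝓝[>] (0:ℝ),
      Real.sqrt (ϑ δ) + C * Real.sqrt (δ * Real.log (1/δ)) < γmin :=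
    hf.eventually (eventually_lt_nhds hγ)
  obtain ⟨ε, hε, hball⟩ := mem_nhdsGT_iff_exists_Ioc_subset.mp hev
  rw [mem_Ioi] at hε
  refine ⟨min (min δ₀ δ₂) ε, by positivity, ?_⟩
  intro δ hδ hδ1 i hiT hthr
  set s : ℝ := (i : ℝ) * δ with hs
  set t : ℝ := ((i : ℝ) + 1) * δ with ht
  have hδδ₀ : δ ≤ δ₀ := le_trans hδ1 (le_trans (min_le_left _ _) (min_le_left _ _))
  have hδδ₂ : δ ≤ δ₂ := le_trans hδ1 (le_trans (min_le_left _ _) (min_le_right _ _))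
  have hδε : δ ≤ ε := le_trans hδ1 (min_le_right _ _)
  have hbound : Real.sqrt (ϑ δ) + C * Real.sqrt (δ * Real.log (1/δ)) < γmin :=
    hball ⟨hδ, hδε⟩
  have hs0 : (0:ℝ) ≤ s := mul_nonneg (Nat.cast_nonneg i) hδ.le
  have hst : s ≤ t := by nlinarith
  have hts : t - s = δ := by ring
  have hsI : s ∈ Icc (0:ℝ) T := ⟨hs0, le_trans hst hiT⟩
  have htI : t ∈ Icc (0:ℝ) T := ⟨le_trans hs0 hst, hiT⟩
  have hXb : |X t - X s| ≤ Real.sqrt (ϑ δ) := Real.abs_le_sqrt hthr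
  have hYb : |Y t - Y s| ≤ C * Real.sqrt (δ * Real.log (1/δ)) := by
    have := hU δ hδ hδδ₀ t htI s hsI (by rw [abs_of_nonneg (by linarith)]; linarith)
    exact this
  have hJb : |J t - J s| < γmin := by
    have h1 : |J t - J s| ≤ |X t - X s| + |Y t - Y s| := by
      have : J t - J s = (X t - X s) - (Y t - Y s) := by
        rw [hX t, hX s]; ring
      rw [this]
      exact abs_sub _ _
    calc |J t - J s| ≤ |X t - X s| + |Y t - Y s| := h1
      _ ≤ Real.sqrt (ϑ δ) + C * Real.sqrt (δ * Real.log (1/δ)) := add_le_add hXb hYb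
      _ < γmin := hbound
  by_contra hN
  have hne : N s ≠ N t := fun h => hN h.symm
  have := hS δ hδ hδδ₂ s hsI t htI hst (le_of_eq hts) hne
  linarith
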